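/- arXiv:1110.6770 — 2 statements merged into one kernel-verified Lean document; each statement's English description precedes it below -/
import Mathlib

section
/- Let R be a Dedekind complete Riesz space and let ((a_{i,j}^{(k)})_{i,j})_{k∈ℕ} be a countable family of (D)-sequences in R. Then for each fixed element u ∈ R with u ≥ 0 there exists a (D)-sequence (a_{i,j})_{i,j} in R such that, for every map φ : ℕ → ℕ and every s ∈ ℕ, one has u ∧ Σ_{k=1}^{s} ( ⋁_{i=1}^{∞} a_{i,φ(i+k)}^{(k)} ) ≤ ⋁_{i=1}^{∞} a_{i,φ(i)} (Fremlin's Lemma). -/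
open scoped BigOperators

/-- A `(D)`-sequence (regulator) in a Riesz space `R`: a bounded double sequence
which is nonnegative, decreasing in `j`, and with `⨅ j, a i j = 0` for each `i`. -/
def IsDSeq {R : Type*} [ConditionallyCompleteLattice R] [AddCommGroup R]
    (a : ℕ → ℕ → R) : Prop :=
  (∃ u : R, ∀ i j, a i j ≤ u) ∧ (∀ i j, 0 ≤ a i j) ∧
    (∀ i j, a i (j + 1) ≤ a i j) ∧ (∀ i, (⨅ j, a i j) = 0)

/-- `R` is weakly σ-distributive. -/
def WeaklySigmaDistrib (R : Type*) [ConditionallyCompleteLattice R] [AddCommGroup R] : Prop :=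
  ∀ a : ℕ → ℕ → R, IsDSeq a → (⨅ φ : ℕ → ℕ, ⨆ i, a i (φ i)) = 0

/-- `R` is super Dedekind complete: every nonempty subset bounded from above contains a
countable subset with the same supremum. -/
def SuperDedekindComplete (R : Type*) [ConditionallyCompleteLattice R] : Prop :=
  ∀ S : Set R, S.Nonempty → BddAbove S →
    ∃ C : Set R, C ⊆ S ∧ C.Nonempty ∧ C.Countable ∧ sSup C = sSup S

/-- `(D)`-convergence of a sequence in `R`. -/
def DConv {R : Type*} [ConditionallyCompleteLattice R] [AddCommGroup R]
    (r : ℕ → R) (l : R) : Prop :=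
  ∃ a : ℕ → ℕ → R, IsDSeq a ∧
    ∀ φ : ℕ → ℕ, ∃ n₀ : ℕ, ∀ n ≥ n₀, |r n - l| ≤ ⨆ i, a i (φ i)

/-- The closure of a subset `C` of `R`:
`cl(C) = ⋃_{(a_{i,j})} ⋂_{φ} U(C, ⨆ i, a i (φ i))`. -/
def clSet {R : Type*} [ConditionallyCompleteLattice R] [AddCommGroup R]
    (C : Set R) : Set R :=
  {z | ∃ a : ℕ → ℕ → R, IsDSeq a ∧
    ∀ φ : ℕ → ℕ, ∃ x ∈ C, |x - z| ≤ ⨆ i, a i (φ i)}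

/-- A tagged partition `{(Es i, ts i) : i < k}` of the set `E`:
measurable pieces, tags belonging to the pieces, overlaps of `μ`-measure zero,
whose union is `E`. -/
def IsPartition {R : Type*} [ConditionallyCompleteLattice R] [AddCommGroup R]
    {T : Type*} [MeasurableSpace T]
    (μ : Set T → R) (E : Set T) (k : ℕ) (Es : ℕ → Set T) (ts : ℕ → T) : Prop :=
  (∀ i < k, MeasurableSet (Es i)) ∧ (∀ i < k, ts i ∈ Es i) ∧
    (∀ i < k, ∀ j < k, i ≠ j → μ (Es i ∩ Es j) = 0) ∧ (⋃ i < k, Es i) = E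

/-- `γ`-fineness of a tagged partition. -/
def IsFine {T : Type*} [PseudoMetricSpace T]
    (γ : T → ℝ) (k : ℕ) (Es : ℕ → Set T) (ts : ℕ → T) : Prop :=
  ∀ i < k, ∀ w ∈ Es i, dist w (ts i) < γ (ts i)

/-- Regularity of a positive finitely additive set function `μ` on the Borel sets of `T`. -/
def IsRegularSetFn {R : Type*} [ConditionallyCompleteLattice R] [AddCommGroup R]
    {T : Type*} [MeasurableSpace T] [TopologicalSpace T]
    (μ : Set T → R) : Prop :=
  ∀ E : Set T, MeasurableSet E → ∃ a : ℕ → ℕ → R, IsDSeq a ∧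
    ∀ φ : ℕ → ℕ, ∃ K U : Set T, IsCompact K ∧ IsOpen U ∧ K ⊆ E ∧ E ⊆ U ∧
      μ (U \ K) ≤ ⨆ i, a i (φ i)

/-- `f` is Kurzweil–Henstock integrable on `E` with integral `I`. -/
def HasKHIntegral {R : Type*} [ConditionallyCompleteLattice R] [CommRing R]
    {T : Type*} [MeasurableSpace T] [PseudoMetricSpace T]
    (μ : Set T → R) (f : T → R) (E : Set T) (I : R) : Prop :=
  ∃ a : ℕ → ℕ → R, IsDSeq a ∧ ∀ φ : ℕ → ℕ, ∃ γ : T → ℝ, (∀ t, 0 < γ t) ∧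
    ∀ (k : ℕ) (Es : ℕ → Set T) (ts : ℕ → T),
      IsPartition μ E k Es ts → IsFine γ k Es ts →
        |(∑ i ∈ Finset.range k, f (ts i) * μ (Es i)) - I| ≤ ⨆ i, a i (φ i)

/-- The closed Minkowski sum `Σ_{i<k} F(ts i) · μ(Es i)` of the sets `F(ts i) μ(Es i)`. -/
def setRiemannSum {R : Type*} [ConditionallyCompleteLattice R] [CommRing R]
    {T : Type*} [MeasurableSpace T]
    (μ : Set T → R) (F : T → Set R) (k : ℕ) (Es : ℕ → Set T) (ts : ℕ → T) : Set R :=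
  clSet {c | ∃ g : ℕ → R, (∀ i < k, g i ∈ F (ts i)) ∧
    c = ∑ i ∈ Finset.range k, g i * μ (Es i)}

/-- The `(*)`-integral `Φ(F,E)` of a multifunction `F` on `E`. -/
def starIntegral {R : Type*} [ConditionallyCompleteLattice R] [CommRing R]
    {T : Type*} [MeasurableSpace T] [PseudoMetricSpace T]
    (μ : Set T → R) (F : T → Set R) (E : Set T) : Set R :=
  {z | ∃ a : ℕ → ℕ → R, IsDSeq a ∧ ∀ φ : ℕ → ℕ, ∃ γ : T → ℝ, (∀ t, 0 < γ t) ∧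
    ∀ (k : ℕ) (Es : ℕ → Set T) (ts : ℕ → T),
      IsPartition μ E k Es ts → IsFine γ k Es ts →
        ∃ c ∈ setRiemannSum μ F k Es ts, |z - c| ≤ ⨆ i, a i (φ i)}

/-- The closed Minkowski sum of the finite family `S 0, …, S (n-1)` of subsets of `R`. -/
def finMinkSum {R : Type*} [ConditionallyCompleteLattice R] [AddCommGroup R]
    (n : ℕ) (S : ℕ → Set R) : Set R :=
  clSet {x | ∃ g : ℕ → R, (∀ k < n, g k ∈ S k) ∧ x = ∑ k ∈ Finset.range n, g k}

/-- The Aumann integral of `F` on `A`, via Kurzweil–Henstock integrable a.e. selections. -/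
def AumannIntegral {R : Type*} [ConditionallyCompleteLattice R] [CommRing R]
    {T : Type*} [MeasurableSpace T] [PseudoMetricSpace T]
    (μ : Set T → R) (F : T → Set R) (A : Set T) : Set R :=
  {I | ∃ f : T → R,
    (∃ N : Set T, MeasurableSet N ∧ μ N = 0 ∧ ∀ t ∉ N, f t ∈ F t) ∧
    (∃ J : R, HasKHIntegral μ f Set.univ J) ∧ HasKHIntegral μ f A I}

/-!
Let `b m j = u ⊓ ∑_{k<m} 2^(k+1) • a k (m-k-1) j`: row `i` of `a k` enters row `i+k+1` of `b`
with weight `2^(k+1)`, and the rows of `b` still decrease to `0`. For fixed `φ` and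
`B = ⨆ i, b i (φ i)` this gives `u ⊓ 2^(k+1) • a k i (φ (i+k+1)) ≤ B` for all `k, i`.
In a lattice-ordered group `p + q ≤ 2 • p ⊔ 2 • q`, so iterating and distributing `u ⊓ ·` over
`⊔` turns these bounds into `u ⊓ ∑_{k<s} a k (I k) (φ (I k + k + 1)) ≤ B` for every choice `I`.
Since `u ⊓ ·` also distributes over bounded suprema, the bound passes to
`u ⊓ ∑_{k<s} ⨆ i, a k i (φ (i+k+1))`.
-/

open Finset

section LatticeOrderedGroup

variable {R : Type*} [Lattice R] [AddCommGroup R] [IsOrderedAddMonoid R]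

lemma add_le_two_nsmul_sup (p q : R) : p + q ≤ 2 • p ⊔ 2 • q := by
  have h : 2 • p ⊔ 2 • q = p + q + |p - q| := by
    rw [abs, add_sup, two_nsmul, two_nsmul]
    congr 1 <;> abel
  exact h ▸ le_add_of_nonneg_right (abs_nonneg _)

lemma inf_nsmul_sum_le (u : R) {B : R} (hB : 0 ≤ B) {x : ℕ → R} :
    ∀ {s n : ℕ}, (∀ k < s, u ⊓ (2 ^ (k + 1) * n) • x k ≤ B) →
      u ⊓ n • ∑ k ∈ range s, x k ≤ B
  | 0, _, _ => by simpa using inf_le_right.trans hB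
  | s + 1, n, h => by
    let := AddCommGroup.toDistribLattice R
    have hrest : u ⊓ (2 * n) • ∑ k ∈ range s, x (k + 1) ≤ B :=
      inf_nsmul_sum_le u hB (x := fun k => x (k + 1)) fun k hk => by
        simpa only [pow_succ, mul_assoc, mul_comm 2 n] using h (k + 1) (by omega)
    have hfirst : u ⊓ (2 * n) • x 0 ≤ B := by simpa using h 0 s.succ_pos
    calc u ⊓ n • ∑ k ∈ range (s + 1), x k
        ≤ u ⊓ (2 • n • (∑ k ∈ range s, x (k + 1)) ⊔ 2 • n • x 0) := by
          rw [sum_range_succ', smul_add]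
          exact inf_le_inf_left u (add_le_two_nsmul_sup _ _)
      _ ≤ B := by
          rw [inf_sup_left, smul_smul, smul_smul]
          exact sup_le hrest hfirst

end LatticeOrderedGroup

namespace IsDSeq

variable {R : Type*} [ConditionallyCompleteLattice R] [AddCommGroup R] {a : ℕ → ℕ → R}

lemma antitone (ha : IsDSeq a) (i : ℕ) : Antitone (a i) :=
  antitone_nat_of_succ_le (ha.2.2.1 i)

lemma nonneg (ha : IsDSeq a) (i j : ℕ) : 0 ≤ a i j :=
  ha.2.1 i j

lemma iInf_eq_zero (ha : IsDSeq a) (i : ℕ) : ⨅ j, a i j = 0 :=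
  ha.2.2.2 i

lemma bddAbove_range (ha : IsDSeq a) (φ : ℕ → ℕ) : BddAbove (Set.range fun i => a i (φ i)) :=
  let ⟨w, hw⟩ := ha.1
  ⟨w, Set.forall_mem_range.2 fun i => hw i (φ i)⟩

end IsDSeq

section ConditionallyCompleteLatticeOrderedGroup

variable {R : Type*} [ConditionallyCompleteLattice R] [AddCommGroup R] [IsOrderedAddMonoid R]

lemma inf_ciSup_le_ciSup_inf {ι : Type*} [Nonempty ι] (u : R) {f : ι → R}
    (hf : BddAbove (Set.range f)) : u ⊓ ⨆ i, f i ≤ ⨆ i, u ⊓ f i := by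
  obtain ⟨c, hc, hc0⟩ : ∃ c, c + ⨆ i, f i = u ⊓ ⨆ i, f i ∧ c ≤ 0 :=
    ⟨_, sub_add_cancel _ _, sub_nonpos.mpr inf_le_right⟩
  have hcf : ∀ i, c + f i ≤ u ⊓ f i := fun i =>
    le_inf ((add_le_add_right (le_ciSup hf i) c).trans (hc ▸ inf_le_left))
      (add_le_of_nonpos_left hc0)
  calc u ⊓ ⨆ i, f i = c + ⨆ i, f i := hc.symm
    _ = ⨆ i, c + f i := add_ciSup hf c
    _ ≤ ⨆ i, u ⊓ f i := ciSup_mono ⟨u, Set.forall_mem_range.2 fun _ => inf_le_left⟩ hcf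

lemma inf_sum_ciSup_le {ι : Type*} [Nonempty ι] {x : ℕ → ι → R}
    (hx : ∀ k, BddAbove (Set.range (x k))) :
    ∀ {s : ℕ} {v D : R}, (∀ I : ℕ → ι, v ⊓ ∑ k ∈ range s, x k (I k) ≤ D) →
      v ⊓ ∑ k ∈ range s, ⨆ i, x k i ≤ D
  | 0, _, _, h => by simpa using h (fun _ => Classical.arbitrary ι)
  | s + 1, v, D, h => by
    set S := ∑ k ∈ range s, ⨆ i, x k i
    rw [sum_range_succ, add_ciSup (hx s)]
    have hbdd : BddAbove (Set.range fun i => S + x s i) := BddAbove.range_add (by simp) (hx s)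
    refine (inf_ciSup_le_ciSup_inf v hbdd).trans (ciSup_le fun i => ?_)
    have hsplit : v ⊓ (S + x s i) = (v - x s i) ⊓ S + x s i := by rw [inf_add, sub_add_cancel]
    rw [hsplit, ← le_sub_iff_add_le]
    refine inf_sum_ciSup_le hx fun I => ?_
    rw [le_sub_iff_add_le, inf_add, sub_add_cancel]
    have hI := h (Function.update I s i)
    rwa [sum_range_succ, Function.update_self, sum_congr rfl fun k hk => by
      rw [Function.update_of_ne (mem_range.mp hk).ne]] at hI

lemma ciInf_add_ciInf_of_antitone {ι : Type*} [Preorder ι] [IsDirectedOrder ι] [Nonempty ι]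
    {f g : ι → R} (hf : Antitone f) (hg : Antitone g) (hf' : BddBelow (Set.range f))
    (hg' : BddBelow (Set.range g)) : (⨅ i, f i) + ⨅ i, g i = ⨅ i, f i + g i :=
  le_antisymm (le_ciInf fun i => add_le_add (ciInf_le hf' i) (ciInf_le hg' i))
    (le_ciInf_add_ciInf fun i j => by
      obtain ⟨k, hik, hjk⟩ := directed_of (· ≤ ·) i j
      exact (ciInf_le (hf'.range_add hg') k).trans (add_le_add (hf hik) (hg hjk)))

lemma sum_ciInf_of_antitone {κ ι : Type*} [Preorder ι] [IsDirectedOrder ι] [Nonempty ι]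
    {f : κ → ι → R} (hf : ∀ k, Antitone (f k)) (hf0 : ∀ k i, 0 ≤ f k i) (s : Finset κ) :
    ∑ k ∈ s, ⨅ i, f k i = ⨅ i, ∑ k ∈ s, f k i := by
  induction s using Finset.cons_induction with
  | empty => simp
  | cons k s hk ih =>
    have hbdd : ∀ g : ι → R, (∀ i, 0 ≤ g i) → BddBelow (Set.range g) :=
      fun g hg => ⟨0, Set.forall_mem_range.2 hg⟩
    simp only [sum_cons]
    rw [ih, ciInf_add_ciInf_of_antitone (hf k)
      (fun i j hij => sum_le_sum fun k _ => hf k hij) (hbdd _ (hf0 k))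
      (hbdd _ fun i => sum_nonneg fun k _ => hf0 k i)]

lemma nsmul_ciInf_of_antitone {ι : Type*} [Preorder ι] [IsDirectedOrder ι] [Nonempty ι]
    {f : ι → R} (hf : Antitone f) (hf0 : ∀ i, 0 ≤ f i) (n : ℕ) :
    n • ⨅ i, f i = ⨅ i, n • f i := by
  simpa only [sum_const, card_range] using
    sum_ciInf_of_antitone (fun _ => hf) (fun _ => hf0) (range n)

def fremlinSeq (u : R) (a : ℕ → ℕ → ℕ → R) (m j : ℕ) : R :=
  u ⊓ ∑ k ∈ range m, 2 ^ (k + 1) • a k (m - k - 1) j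

lemma isDSeq_fremlinSeq {a : ℕ → ℕ → ℕ → R} (ha : ∀ k, IsDSeq (a k)) {u : R} (hu : 0 ≤ u) :
    IsDSeq (fremlinSeq u a) := by
  have hanti : ∀ m k, Antitone fun j => 2 ^ (k + 1) • a k (m - k - 1) j :=
    fun m k i j hij => nsmul_le_nsmul_right ((ha k).antitone _ hij) _
  have hnonneg : ∀ m k j, 0 ≤ 2 ^ (k + 1) • a k (m - k - 1) j :=
    fun m k j => nsmul_nonneg ((ha k).nonneg _ _) _
  have hb0 : ∀ m j, 0 ≤ fremlinSeq u a m j :=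
    fun m j => le_inf hu (sum_nonneg fun k _ => hnonneg m k j)
  refine ⟨⟨u, fun _ _ => inf_le_left⟩, hb0,
    fun m j => inf_le_inf_left u (sum_le_sum fun k _ => hanti m k j.le_succ), fun m => ?_⟩
  refine le_antisymm ?_ (le_ciInf (hb0 m))
  calc ⨅ j, fremlinSeq u a m j
      ≤ ⨅ j, ∑ k ∈ range m, 2 ^ (k + 1) • a k (m - k - 1) j :=
        ciInf_mono ⟨0, Set.forall_mem_range.2 (hb0 m)⟩ fun j => inf_le_right
    _ = ∑ k ∈ range m, 2 ^ (k + 1) • ⨅ j, a k (m - k - 1) j := by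
        rw [← sum_ciInf_of_antitone (hanti m) (hnonneg m)]
        refine sum_congr rfl fun k _ => ?_
        rw [nsmul_ciInf_of_antitone ((ha k).antitone _) ((ha k).nonneg _)]
    _ = 0 := by simp only [(ha _).iInf_eq_zero, nsmul_zero, sum_const_zero]

lemma inf_two_pow_nsmul_le_fremlinSeq {a : ℕ → ℕ → ℕ → R} (ha : ∀ k i j, 0 ≤ a k i j) (u : R)
    (k i j : ℕ) : u ⊓ 2 ^ (k + 1) • a k i j ≤ fremlinSeq u a (i + k + 1) j := by
  refine inf_le_inf_left u ?_
  have := single_le_sum (f := fun k' => 2 ^ (k' + 1) • a k' (i + k + 1 - k' - 1) j)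
    (fun k' _ => nsmul_nonneg (ha _ _ _) _) (mem_range.2 (by omega : k < i + k + 1))
  simpa [show i + k + 1 - k - 1 = i by omega] using this

end ConditionallyCompleteLatticeOrderedGroup

theorem fremlin_lemma_general {R : Type*} [ConditionallyCompleteLattice R] [AddCommGroup R]
    [CovariantClass R R (· + ·) (· ≤ ·)]
    (a : ℕ → ℕ → ℕ → R) (ha : ∀ k, IsDSeq (a k)) (u : R) (hu : 0 ≤ u) :
    ∃ b : ℕ → ℕ → R, IsDSeq b ∧ ∀ (φ : ℕ → ℕ) (s : ℕ),
      u ⊓ (∑ k ∈ Finset.range s, ⨆ i, a k i (φ (i + k + 1))) ≤ ⨆ i, b i (φ i) := by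
  have : IsOrderedAddMonoid R :=
    { add_le_add_left := fun p q h r => by rw [add_comm p, add_comm q]; exact add_le_add_right h r }
  have hb := isDSeq_fremlinSeq ha hu
  refine ⟨fremlinSeq u a, hb, fun φ s => ?_⟩
  have hbdd := hb.bddAbove_range φ
  have hB : 0 ≤ ⨆ i, fremlinSeq u a i (φ i) := (hb.nonneg 0 (φ 0)).trans (le_ciSup hbdd 0)
  refine inf_sum_ciSup_le (fun k => (ha k).bddAbove_range _) fun I => ?_
  have hterm : ∀ k i, u ⊓ (2 ^ (k + 1) * 1) • a k i (φ (i + k + 1)) ≤ ⨆ i, fremlinSeq u a i (φ i) :=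
    fun k i => by
      rw [mul_one]
      exact (inf_two_pow_nsmul_le_fremlinSeq (fun k => (ha k).nonneg) u k i _).trans
        (le_ciSup hbdd _)
  simpa only [one_smul] using inf_nsmul_sum_le u hB fun k _ => hterm k (I k)

/-- **Fremlin's Lemma.** Given a countable family of `(D)`-sequences in a Dedekind complete
Riesz space `R` and `u ≥ 0`, there is a single `(D)`-sequence dominating, after taking the
infimum with `u`, all finite sums `Σ_{k=1}^{s} ⨆ i, a k i (φ (i+k))`. -/
theorem fremlin_lemma {R : Type*} [ConditionallyCompleteLattice R] [AddCommGroup R]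
    [Module ℝ R] [CovariantClass R R (· + ·) (· ≤ ·)]
    (a : ℕ → ℕ → ℕ → R) (ha : ∀ k, IsDSeq (a k)) (u : R) (hu : 0 ≤ u) :
    ∃ b : ℕ → ℕ → R, IsDSeq b ∧ ∀ (φ : ℕ → ℕ) (s : ℕ),
      u ⊓ (∑ k ∈ Finset.range s, ⨆ i, a k i (φ (i + k + 1))) ≤ ⨆ i, b i (φ i) :=
  fremlin_lemma_general a ha u hu
end

section
/- Let R = c₀₀ be the Riesz space of eventually null real-valued sequences with the pointwise order, and let u_n ∈ c₀₀ denote the sequence whose n-th coordinate is 1 and all other coordinates are 0. Let λ be Lebesgue measure on the Borel subsets of [0,1]. Define f : [0,1] → c₀₀ by f(x) = u_n if x = 1/n for some n ∈ ℕ, and f(x) = 0 otherwise. Then f is not (KH)-integrable on [0,1]; in fact, for every gage δ : [0,1] → (0,∞) the set of Riemann sums { Σ_Π f : Π a δ-fine partition of [0,1] } is not bounded from above in c₀₀. -/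
/-!
Fix a gage `δ` and `n ≥ 1`. Finitely many balls `B(t, δ t)`, the first one centred at `1/n`,
cover `[0,1]`; disjointifying them gives a `δ`-fine partition whose first piece has positive
measure and tag `1/n`. As `f ≥ 0`, its Riemann sum has positive `n`-th coordinate. An upper bound
in `c₀₀` vanishes outside its finite support, so for no gage are the Riemann sums bounded above,
whereas an integral `I` with regulator `a` would bound them by `I + sup_i a i 0`.
-/

open MeasureTheory

/-- A `(D)`-sequence (regulator) in `c₀₀ = ℕ →₀ ℝ` (eventually null real sequences with the
pointwise order): a bounded double sequence, nonnegative, decreasing in `j`, with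
`inf_j a i j = 0` for each `i`. -/
def C00IsDSeq (a : ℕ → ℕ → (ℕ →₀ ℝ)) : Prop :=
  (∃ u : ℕ →₀ ℝ, ∀ i j, a i j ≤ u) ∧ (∀ i j, 0 ≤ a i j) ∧
    (∀ i j, a i (j + 1) ≤ a i j) ∧ (∀ i, IsGLB (Set.range (a i)) 0)

/-- A tagged partition of `[0,1]`: finitely many Borel sets covering `[0,1]`, with tags in the
pieces, and pairwise intersections of Lebesgue measure zero. -/
def C00IsPartition (k : ℕ) (Es : ℕ → Set ℝ) (ts : ℕ → ℝ) : Prop :=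
  (∀ i < k, MeasurableSet (Es i)) ∧ (∀ i < k, ts i ∈ Es i) ∧
    (∀ i < k, ∀ j < k, i ≠ j → volume (Es i ∩ Es j) = 0) ∧
    (⋃ i < k, Es i) = Set.Icc (0 : ℝ) 1

/-- `δ`-fineness of a tagged partition of `[0,1]`. -/
def C00IsFine (δ : ℝ → ℝ) (k : ℕ) (Es : ℕ → Set ℝ) (ts : ℕ → ℝ) : Prop :=
  ∀ i < k, ∀ w ∈ Es i, |w - ts i| < δ (ts i)

/-- The Riemann sum `Σ_i λ(E_i) • f(t_i)` of `f : [0,1] → c₀₀` over a tagged partition,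
where `λ` is Lebesgue measure. -/
noncomputable def C00RiemannSum (f : ℝ → (ℕ →₀ ℝ)) (k : ℕ) (Es : ℕ → Set ℝ) (ts : ℕ → ℝ) :
    ℕ →₀ ℝ :=
  ∑ i ∈ Finset.range k, (volume (Es i)).toReal • f (ts i)

/-- `f : [0,1] → c₀₀` is Kurzweil–Henstock integrable with integral `I`. -/
def C00HasKHIntegral (f : ℝ → (ℕ →₀ ℝ)) (I : ℕ →₀ ℝ) : Prop :=
  ∃ a : ℕ → ℕ → (ℕ →₀ ℝ), C00IsDSeq a ∧ ∀ φ : ℕ → ℕ,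
    ∃ s : ℕ →₀ ℝ, IsLUB (Set.range fun i => a i (φ i)) s ∧
      ∃ δ : ℝ → ℝ, (∀ x, 0 < δ x) ∧
        ∀ (k : ℕ) (Es : ℕ → Set ℝ) (ts : ℕ → ℝ),
          C00IsPartition k Es ts → C00IsFine δ k Es ts →
            |C00RiemannSum f k Es ts - I| ≤ s

open Set Metric

lemma biUnion_lt_disjointed {α : Type*} (f : ℕ → Set α) (k : ℕ) :
    ⋃ i < k, disjointed f i = ⋃ i < k, f i := by
  cases k with
  | zero => simp
  | succ n =>
    have h := biUnion_range_succ_disjointed f n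
    rw [partialSups_eq_biUnion_range] at h
    simpa only [Finset.mem_range] using h

def ballPieces (δ : ℝ → ℝ) (ts : ℕ → ℝ) (i : ℕ) : Set ℝ :=
  insert (ts i) (Icc 0 1 ∩ disjointed (fun j => ball (ts j) (δ (ts j))) i)

section ballPieces

variable {δ : ℝ → ℝ} {ts : ℕ → ℝ} {k : ℕ}

lemma inter_ballPieces_subset {i j : ℕ} (hij : i ≠ j) :
    ballPieces δ ts i ∩ ballPieces δ ts j ⊆ {ts i, ts j} := by
  rintro x ⟨hxi | ⟨-, hxi⟩, hxj | ⟨-, hxj⟩⟩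
  · exact .inl hxi
  · exact .inl hxi
  · exact .inr hxj
  · exact absurd hxj (disjoint_left.1 (disjoint_disjointed _ hij) hxi)

lemma c00IsPartition_ballPieces (hts : ∀ i < k, ts i ∈ Icc (0 : ℝ) 1)
    (hcover : Icc (0 : ℝ) 1 ⊆ ⋃ i < k, ball (ts i) (δ (ts i))) :
    C00IsPartition k (ballPieces δ ts) ts := by
  refine ⟨fun i _ => ?_, fun i _ => mem_insert _ _, fun i _ j _ hij => ?_, ?_⟩
  · exact (measurableSet_Icc.inter (.disjointed (fun _ => measurableSet_ball) i)).insert _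
  · exact measure_mono_null (inter_ballPieces_subset hij) ((toFinite _).measure_zero _)
  · refine (iUnion₂_subset fun i hi => insert_subset (hts i hi) inter_subset_left).antisymm ?_
    intro x hx
    rw [← biUnion_lt_disjointed] at hcover
    obtain ⟨i, hi, hxi⟩ := mem_iUnion₂.1 (hcover hx)
    exact mem_iUnion₂.2 ⟨i, hi, mem_insert_of_mem _ ⟨hx, hxi⟩⟩

lemma c00IsFine_ballPieces (hδ : ∀ i < k, 0 < δ (ts i)) :
    C00IsFine δ k (ballPieces δ ts) ts := by
  rintro i hi w (rfl | ⟨-, hw⟩)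
  · simpa using hδ i hi
  · simpa [Real.dist_eq] using disjointed_subset _ i hw

lemma inter_ball_subset_ballPieces_zero :
    Icc 0 1 ∩ ball (ts 0) (δ (ts 0)) ⊆ ballPieces δ ts 0 := by
  rw [ballPieces, disjointed_zero]
  exact subset_insert _ _

end ballPieces

lemma exists_ballCover_Icc {δ : ℝ → ℝ} (hδ : ∀ x, 0 < δ x) {t₀ : ℝ} (ht₀ : t₀ ∈ Icc (0 : ℝ) 1) :
    ∃ (k : ℕ) (ts : ℕ → ℝ), 0 < k ∧ ts 0 = t₀ ∧ (∀ i < k, ts i ∈ Icc (0 : ℝ) 1) ∧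
      Icc (0 : ℝ) 1 ⊆ ⋃ i < k, ball (ts i) (δ (ts i)) := by
  obtain ⟨F, hF, hcover⟩ := isCompact_Icc.elim_nhds_subcover (fun x => ball x (δ x))
    fun x _ => ball_mem_nhds x (hδ x)
  set L := t₀ :: F.toList
  refine ⟨L.length, fun i => L.getD i 0, List.length_pos_of_ne_nil (by simp [L]), rfl,
    fun i hi => ?_, fun x hx => ?_⟩
  · dsimp only
    rw [List.getD_eq_getElem _ _ hi]
    rcases List.mem_cons.1 (List.getElem_mem hi) with h | h
    · exact h ▸ ht₀
    · exact hF _ (Finset.mem_toList.1 h)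
  · obtain ⟨y, hy, hxy⟩ := mem_iUnion₂.1 (hcover hx)
    obtain ⟨i, hi, rfl⟩ :=
      List.mem_iff_getElem.1 (List.mem_cons_of_mem t₀ (Finset.mem_toList.2 hy))
    exact mem_iUnion₂.2 ⟨i, hi, by dsimp only; rwa [List.getD_eq_getElem L 0 hi]⟩

lemma volume_Icc_inter_ball_pos {a b t r : ℝ} (hab : a < b) (ht : t ∈ Icc a b) (hr : 0 < r) :
    0 < volume (Icc a b ∩ ball t r) := by
  have hsub : Ioo (max a (t - r)) (min b (t + r)) ⊆ Icc a b ∩ ball t r := by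
    rintro x ⟨hlo, hhi⟩
    rw [max_lt_iff] at hlo
    rw [lt_min_iff] at hhi
    refine ⟨⟨hlo.1.le, hhi.1.le⟩, ?_⟩
    rw [mem_ball, Real.dist_eq, abs_sub_lt_iff]
    constructor <;> linarith
  refine lt_of_lt_of_le ?_ (measure_mono hsub)
  rw [Real.volume_Ioo, ENNReal.ofReal_pos, sub_pos, max_lt_iff, lt_min_iff, lt_min_iff]
  obtain ⟨hat, htb⟩ := ht
  refine ⟨⟨?_, ?_⟩, ?_, ?_⟩ <;> linarith

lemma exists_c00IsFine_partition_tag_zero {δ : ℝ → ℝ} (hδ : ∀ x, 0 < δ x) {t₀ : ℝ}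
    (ht₀ : t₀ ∈ Icc (0 : ℝ) 1) :
    ∃ (k : ℕ) (Es : ℕ → Set ℝ) (ts : ℕ → ℝ), C00IsPartition k Es ts ∧ C00IsFine δ k Es ts ∧
      0 < k ∧ ts 0 = t₀ ∧ 0 < volume (Es 0) := by
  obtain ⟨k, ts, hk, rfl, hts, hcover⟩ := exists_ballCover_Icc hδ ht₀
  exact ⟨k, ballPieces δ ts, ts, c00IsPartition_ballPieces hts hcover,
    c00IsFine_ballPieces fun i _ => hδ (ts i), hk, rfl,
    (volume_Icc_inter_ball_pos zero_lt_one ht₀ (hδ _)).trans_le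
      (measure_mono inter_ball_subset_ballPieces_zero)⟩

lemma C00IsPartition.volume_ne_top {k : ℕ} {Es : ℕ → Set ℝ} {ts : ℕ → ℝ}
    (h : C00IsPartition k Es ts) {i : ℕ} (hi : i < k) : volume (Es i) ≠ ⊤ := by
  have hsub : Es i ⊆ Icc 0 1 := h.2.2.2 ▸ subset_biUnion_of_mem (u := Es) hi
  exact ((measure_mono hsub).trans_lt measure_Icc_lt_top).ne

lemma c00RiemannSum_apply (f : ℝ → (ℕ →₀ ℝ)) (k : ℕ) (Es : ℕ → Set ℝ) (ts : ℕ → ℝ) (n : ℕ) :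
    C00RiemannSum f k Es ts n = ∑ i ∈ Finset.range k, (volume (Es i)).toReal * f (ts i) n := by
  simp [C00RiemannSum, Finsupp.finsetSum_apply]

lemma c00RiemannSum_apply_pos {f : ℝ → (ℕ →₀ ℝ)} {k : ℕ} {Es : ℕ → Set ℝ} {ts : ℕ → ℝ} {n : ℕ}
    (hP : C00IsPartition k Es ts) (hk : 0 < k) (hvol : 0 < volume (Es 0))
    (hf : ∀ x, 0 ≤ f x n) (hf₀ : 0 < f (ts 0) n) : 0 < C00RiemannSum f k Es ts n := by
  rw [c00RiemannSum_apply]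
  refine lt_of_lt_of_le (mul_pos (ENNReal.toReal_pos hvol.ne' (hP.volume_ne_top hk)) hf₀) ?_
  exact Finset.single_le_sum (f := fun i => (volume (Es i)).toReal * f (ts i) n)
    (fun i _ => mul_nonneg ENNReal.toReal_nonneg (hf _)) (Finset.mem_range.2 hk)

def c00FineRiemannSums (f : ℝ → (ℕ →₀ ℝ)) (δ : ℝ → ℝ) : Set (ℕ →₀ ℝ) :=
  {S | ∃ (k : ℕ) (Es : ℕ → Set ℝ) (ts : ℕ → ℝ),
    C00IsPartition k Es ts ∧ C00IsFine δ k Es ts ∧ S = C00RiemannSum f k Es ts}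

lemma exists_mem_c00FineRiemannSums_apply_pos {f : ℝ → (ℕ →₀ ℝ)} {δ : ℝ → ℝ}
    (hδ : ∀ x, 0 < δ x) {n : ℕ} (hf : ∀ x, 0 ≤ f x n) {t : ℝ} (ht : t ∈ Icc (0 : ℝ) 1)
    (hft : 0 < f t n) : ∃ S ∈ c00FineRiemannSums f δ, 0 < S n := by
  obtain ⟨k, Es, ts, hP, hfine, hk, rfl, hvol⟩ := exists_c00IsFine_partition_tag_zero hδ ht
  exact ⟨_, ⟨k, Es, ts, hP, hfine, rfl⟩, c00RiemannSum_apply_pos hP hk hvol hf hft⟩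

lemma C00HasKHIntegral.exists_bddAbove_c00FineRiemannSums {f : ℝ → (ℕ →₀ ℝ)} {I : ℕ →₀ ℝ}
    (h : C00HasKHIntegral f I) :
    ∃ δ : ℝ → ℝ, (∀ x, 0 < δ x) ∧ BddAbove (c00FineRiemannSums f δ) := by
  obtain ⟨_, -, hφ⟩ := h
  obtain ⟨s, -, δ, hδ, hbound⟩ := hφ 0
  refine ⟨δ, hδ, I + s, ?_⟩
  rintro _ ⟨k, Es, ts, hP, hfine, rfl⟩
  exact sub_le_iff_le_add'.1 ((le_abs_self _).trans (hbound k Es ts hP hfine))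

lemma Finsupp.not_bddAbove_of_infinite {ι M : Type*} [Zero M] [Preorder M]
    {S : Set (ι →₀ M)} {N : Set ι} (hN : N.Infinite) (h : ∀ n ∈ N, ∃ s ∈ S, 0 < s n) :
    ¬ BddAbove S := by
  rintro ⟨u, hu⟩
  obtain ⟨n, hn, hnu⟩ := hN.exists_notMem_finset u.support
  obtain ⟨s, hs, hpos⟩ := h n hn
  exact hpos.not_ge ((hu hs n).trans_eq (Finsupp.notMem_support_iff.1 hnu))

/-- The function `f : [0,1] → c₀₀` with `f(1/n) = u_n` (the `n`-th unit vector) for `n ≥ 1`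
and `f = 0` elsewhere is Bochner-null but not `(KH)`-integrable on `[0,1]`; in fact, for every
gage `δ` the set of Riemann sums over `δ`-fine partitions of `[0,1]` is not bounded from above
in `c₀₀`. -/
theorem c00_not_KHIntegrable (f : ℝ → (ℕ →₀ ℝ))
    (hf₁ : ∀ n : ℕ, 1 ≤ n → f (1 / (n : ℝ)) = Finsupp.single n 1)
    (hf₂ : ∀ x : ℝ, (¬ ∃ n : ℕ, 1 ≤ n ∧ x = 1 / (n : ℝ)) → f x = 0) :
    (¬ ∃ I : ℕ →₀ ℝ, C00HasKHIntegral f I) ∧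
      ∀ δ : ℝ → ℝ, (∀ x, 0 < δ x) →
        ¬ BddAbove {S : ℕ →₀ ℝ | ∃ (k : ℕ) (Es : ℕ → Set ℝ) (ts : ℕ → ℝ),
          C00IsPartition k Es ts ∧ C00IsFine δ k Es ts ∧ S = C00RiemannSum f k Es ts} := by
  have hf_nonneg : ∀ x n, 0 ≤ f x n := by
    intro x n
    by_cases hx : ∃ m : ℕ, 1 ≤ m ∧ x = 1 / (m : ℝ)
    · obtain ⟨m, hm, rfl⟩ := hx
      rw [hf₁ m hm]
      exact Finsupp.single_nonneg.2 zero_le_one n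
    · simp [hf₂ x hx]
  have unbounded (δ : ℝ → ℝ) (hδ : ∀ x, 0 < δ x) : ¬ BddAbove (c00FineRiemannSums f δ) := by
    refine Finsupp.not_bddAbove_of_infinite (Ici_infinite 1) fun n (hn : 1 ≤ n) => ?_
    have hn' : (1 : ℝ) ≤ n := by exact_mod_cast hn
    refine exists_mem_c00FineRiemannSums_apply_pos hδ (hf_nonneg · n) (t := 1 / n)
      ⟨by positivity, div_le_one_of_le₀ hn' (by positivity)⟩ ?_
    rw [hf₁ n hn, Finsupp.single_eq_same]
    exact one_pos
  refine ⟨fun ⟨I, hI⟩ => ?_, unbounded⟩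
  obtain ⟨δ, hδ, hbdd⟩ := hI.exists_bddAbove_c00FineRiemannSums
  exact unbounded δ hδ hbdd
end
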